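/- Let f : ℝ^d → ℝ be L-smooth and convex with minimizer x*, and let x_{t+1} = x_t − γ∇f(x_t) with 0 < γ ≤ 1/L. If ‖x_0 − x*‖² ≤ C, then min_{0 ≤ t ≤ T−1} (f(x_t) − f(x*)) ≤ C/(γT) for every T ≥ 1. -/

import Mathlib

/-!
Convexity gives `f x_t - f x* ≤ ⟪∇f x_t, x_t - x*⟫`, and co-coercivity of the gradient of an
`L`-smooth convex function, `‖∇f x‖² ≤ L ⟪∇f x, x - x*⟫`, lets this inner product absorb the
`γ² ‖∇f x_t‖²` term of `‖x_{t+1} - x*‖²` when `γ ≤ 1 / L`. Hence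
`‖x_{t+1} - x*‖² + γ (f x_t - f x*) ≤ ‖x_t - x*‖²`; telescoping bounds the sum of the first `T`
gaps by `C / γ`, and the smallest of them is at most their average.
-/

open scoped RealInnerProductSpace
open Set AffineMap

section SmoothConvex

variable {F : Type*} [NormedAddCommGroup F] [InnerProductSpace ℝ F] [CompleteSpace F]
  {f : F → ℝ} {f' : F → F} {g : F} {L γ : ℝ} {xstar : F}

theorem HasGradientAt.hasDerivAt_comp_lineMap {x y : F} {t : ℝ}
    (hf : HasGradientAt f g (lineMap x y t)) :
    HasDerivAt (f ∘ (lineMap x y : ℝ → F)) ⟪g, y - x⟫ t := by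
  simpa using hf.hasFDerivAt.comp_hasDerivAt t hasDerivAt_lineMap

theorem IsLocalMin.hasGradientAt_eq_zero {x : F} (hmin : IsLocalMin f x)
    (hx : HasGradientAt f g x) : g = 0 := by
  simpa using hmin.hasFDerivAt_eq_zero hx.hasFDerivAt

theorem ConvexOn.add_inner_le_of_hasGradientAt (hconv : ConvexOn ℝ univ f) {x : F}
    (hx : HasGradientAt f g x) (y : F) : f x + ⟪g, y - x⟫ ≤ f y := by
  have hline : ConvexOn ℝ univ (f ∘ (lineMap x y : ℝ → F)) := hconv.comp_affineMap _
  have hderiv : HasDerivAt (f ∘ (lineMap x y : ℝ → F)) ⟪g, y - x⟫ 0 :=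
    HasGradientAt.hasDerivAt_comp_lineMap (by simpa using hx)
  have := hline.le_slope_of_hasDerivAt (mem_univ 0) (mem_univ 1) zero_lt_one hderiv
  simp only [slope_def_field, Function.comp_apply, lineMap_apply_one, lineMap_apply_zero,
    sub_zero, div_one] at this
  linarith

theorem le_add_inner_add_sq_of_lipschitz_gradient (hdiff : ∀ x, HasGradientAt f (f' x) x)
    (hlip : ∀ x y, ‖f' x - f' y‖ ≤ L * ‖x - y‖) (x y : F) :
    f y ≤ f x + ⟪f' x, y - x⟫ + L / 2 * ‖y - x‖ ^ 2 := by
  set v := y - x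
  let p : ℝ → F := lineMap x y
  -- the error of the quadratic model along the segment is antitone: by the Lipschitz bound its
  -- derivative is nonpositive for `s ≥ 0`
  let h : ℝ → ℝ := fun s => f (p s) - s * ⟪f' x, v⟫ - L / 2 * s ^ 2 * ‖v‖ ^ 2
  have hderiv : ∀ s, HasDerivAt h (⟪f' (p s) - f' x, v⟫ - L * s * ‖v‖ ^ 2) s := by
    intro s
    have := (((hdiff (p s)).hasDerivAt_comp_lineMap).sub
      ((hasDerivAt_id s).mul_const ⟪f' x, v⟫)).sub
      (((hasDerivAt_pow 2 s).const_mul (L / 2)).mul_const (‖v‖ ^ 2))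
    refine this.congr_deriv ?_
    rw [inner_sub_left]
    ring
  have hanti : AntitoneOn h (Icc 0 1) := by
    refine antitoneOn_of_hasDerivWithinAt_nonpos (convex_Icc 0 1)
      (fun s _ => (hderiv s).continuousAt.continuousWithinAt)
      (fun s _ => (hderiv s).hasDerivWithinAt) fun s hs => ?_
    rw [interior_Icc] at hs
    have hdist : ‖p s - x‖ = s * ‖v‖ := by
      rw [show p s = s • v + x from lineMap_apply_module' x y s, add_sub_cancel_right, norm_smul,
        Real.norm_of_nonneg hs.1.le]
    calc ⟪f' (p s) - f' x, v⟫ - L * s * ‖v‖ ^ 2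
        ≤ ‖f' (p s) - f' x‖ * ‖v‖ - L * s * ‖v‖ ^ 2 := by
          gcongr; exact real_inner_le_norm _ _
      _ ≤ L * (s * ‖v‖) * ‖v‖ - L * s * ‖v‖ ^ 2 := by
          gcongr; rw [← hdist]; exact hlip _ _
      _ = 0 := by ring
  have := hanti (left_mem_Icc.2 zero_le_one) (right_mem_Icc.2 zero_le_one) zero_le_one
  simp only [h, p, lineMap_apply_zero, lineMap_apply_one] at this
  linarith

theorem ConvexOn.add_inner_add_sq_norm_gradient_sub_le (hconv : ConvexOn ℝ univ f)
    (hdiff : ∀ x, HasGradientAt f (f' x) x) (hL : 0 < L)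
    (hlip : ∀ x y, ‖f' x - f' y‖ ≤ L * ‖x - y‖) (x y : F) :
    f x + ⟪f' x, y - x⟫ + 1 / (2 * L) * ‖f' x - f' y‖ ^ 2 ≤ f y := by
  set w := f' x - f' y
  -- evaluate the convexity lower bound from `x` and the quadratic upper bound from `y` at `z`
  set z := y + L⁻¹ • w with hz
  have hbelow : f x + (⟪f' x, y - x⟫ + L⁻¹ * ⟪f' x, w⟫) ≤ f z := by
    have := hconv.add_inner_le_of_hasGradientAt (hdiff x) z
    rwa [show z - x = (y - x) + L⁻¹ • w by rw [hz]; abel, inner_add_right,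
      real_inner_smul_right] at this
  have habove : f z ≤ f y + L⁻¹ * ⟪f' y, w⟫ + L / 2 * (L⁻¹ * ‖w‖) ^ 2 := by
    have := le_add_inner_add_sq_of_lipschitz_gradient hdiff hlip y z
    rwa [add_sub_cancel_left, real_inner_smul_right, norm_smul, Real.norm_of_nonneg
      (inv_nonneg.2 hL.le)] at this
  have hw : ⟪f' x, w⟫ - ⟪f' y, w⟫ = ‖w‖ ^ 2 := by
    rw [← inner_sub_left, real_inner_self_eq_norm_sq]
  have : L⁻¹ * ⟪f' x, w⟫ - L⁻¹ * ⟪f' y, w⟫ - L / 2 * (L⁻¹ * ‖w‖) ^ 2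
      = 1 / (2 * L) * ‖w‖ ^ 2 := by
    rw [← mul_sub, hw]; field_simp; ring
  linarith

theorem ConvexOn.sq_norm_gradient_sub_le_mul_inner (hconv : ConvexOn ℝ univ f)
    (hdiff : ∀ x, HasGradientAt f (f' x) x) (hL : 0 < L)
    (hlip : ∀ x y, ‖f' x - f' y‖ ≤ L * ‖x - y‖) (x y : F) :
    ‖f' x - f' y‖ ^ 2 ≤ L * ⟪f' x - f' y, x - y⟫ := by
  have hxy := hconv.add_inner_add_sq_norm_gradient_sub_le hdiff hL hlip x y
  have hyx := hconv.add_inner_add_sq_norm_gradient_sub_le hdiff hL hlip y x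
  rw [norm_sub_rev] at hyx
  have hinner : ⟪f' x - f' y, x - y⟫ = -⟪f' x, y - x⟫ - ⟪f' y, x - y⟫ := by
    rw [inner_sub_left, ← inner_neg_right, neg_sub]
  have : 1 / (2 * L) * ‖f' x - f' y‖ ^ 2 * (2 * L) = ‖f' x - f' y‖ ^ 2 := by
    field_simp
  nlinarith

theorem sq_norm_gradient_step_sub_add_le (hconv : ConvexOn ℝ univ f)
    (hdiff : ∀ x, HasGradientAt f (f' x) x) (hL : 0 < L)
    (hlip : ∀ x y, ‖f' x - f' y‖ ≤ L * ‖x - y‖) (hstar : f' xstar = 0)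
    (hγ : 0 ≤ γ) (hγL : γ ≤ 1 / L) (x : F) :
    ‖x - γ • f' x - xstar‖ ^ 2 + γ * (f x - f xstar) ≤ ‖x - xstar‖ ^ 2 := by
  have hexpand : ‖x - γ • f' x - xstar‖ ^ 2
      = ‖x - xstar‖ ^ 2 - 2 * γ * ⟪f' x, x - xstar⟫ + γ ^ 2 * ‖f' x‖ ^ 2 := by
    rw [show x - γ • f' x - xstar = (x - xstar) - γ • f' x by abel, norm_sub_sq_real,
      real_inner_smul_right, real_inner_comm, norm_smul, Real.norm_of_nonneg hγ]
    ring
  have hcoco := hconv.sq_norm_gradient_sub_le_mul_inner hdiff hL hlip x xstar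
  rw [hstar, sub_zero] at hcoco
  have hgap : f x - f xstar ≤ ⟪f' x, x - xstar⟫ := by
    have := hconv.add_inner_le_of_hasGradientAt (hdiff x) xstar
    rw [← neg_sub, inner_neg_right] at this
    linarith
  have hγL' : γ * L ≤ 1 := by rwa [le_div_iff₀ hL] at hγL
  have hinner : 0 ≤ ⟪f' x, x - xstar⟫ := by nlinarith [sq_nonneg ‖f' x‖]
  nlinarith [mul_le_mul_of_nonneg_left hcoco (sq_nonneg γ),
    mul_le_mul_of_nonneg_right hγL' (mul_nonneg hγ hinner), mul_le_mul_of_nonneg_left hgap hγ]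

theorem sq_norm_gradientDescent_sub_add_sum_le (hconv : ConvexOn ℝ univ f)
    (hdiff : ∀ x, HasGradientAt f (f' x) x) (hL : 0 < L)
    (hlip : ∀ x y, ‖f' x - f' y‖ ≤ L * ‖x - y‖) (hstar : f' xstar = 0)
    (hγ : 0 ≤ γ) (hγL : γ ≤ 1 / L) {x : ℕ → F} (hiter : ∀ t, x (t + 1) = x t - γ • f' (x t))
    (T : ℕ) :
    ‖x T - xstar‖ ^ 2 + γ * ∑ t ∈ Finset.range T, (f (x t) - f xstar) ≤ ‖x 0 - xstar‖ ^ 2 := by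
  induction T with
  | zero => simp
  | succ T ih =>
    have hstep := sq_norm_gradient_step_sub_add_le hconv hdiff hL hlip hstar hγ hγL (x T)
    rw [← hiter] at hstep
    rw [Finset.sum_range_succ, mul_add]
    linarith

end SmoothConvex

theorem gd_best_iterate_rate_general
    {d : ℕ} (f : EuclideanSpace ℝ (Fin d) → ℝ)
    (f' : EuclideanSpace ℝ (Fin d) → EuclideanSpace ℝ (Fin d))
    (hdiff : ∀ x, HasGradientAt f (f' x) x)
    (hconv : ConvexOn ℝ Set.univ f)
    (L : ℝ) (hL : 0 < L)
    (hlip : ∀ x y, ‖f' x - f' y‖ ≤ L * ‖x - y‖)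
    (xstar : EuclideanSpace ℝ (Fin d))
    (hmin : ∀ z, f xstar ≤ f z)
    (γ : ℝ) (hγ : 0 < γ) (hγL : γ ≤ 1 / L)
    (x : ℕ → EuclideanSpace ℝ (Fin d))
    (hiter : ∀ t, x (t + 1) = x t - γ • f' (x t))
    (C : ℝ) (h0 : ‖x 0 - xstar‖ ^ 2 ≤ C) :
    ∀ T : ℕ, 1 ≤ T → ∃ t < T, f (x t) - f xstar ≤ C / (γ * T) := by
  intro T hT
  have hstar : f' xstar = 0 :=
    IsLocalMin.hasGradientAt_eq_zero (Filter.Eventually.of_forall hmin) (hdiff xstar)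
  have hdist := sq_norm_gradientDescent_sub_add_sum_le hconv hdiff hL hlip hstar hγ.le hγL hiter T
  have hsum :
      ∑ t ∈ Finset.range T, (f (x t) - f xstar) ≤ ∑ _t ∈ Finset.range T, C / (γ * T) := by
    have hT' : (0 : ℝ) < T := by exact_mod_cast hT
    rw [Finset.sum_const, Finset.card_range, nsmul_eq_mul,
      show (T : ℝ) * (C / (γ * T)) = C / γ by field_simp, le_div_iff₀ hγ]
    linarith [sq_nonneg ‖x T - xstar‖]
  obtain ⟨t, ht, hle⟩ := Finset.exists_le_of_sum_le (Finset.nonempty_range_iff.2 (by omega)) hsum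
  exact ⟨t, Finset.mem_range.1 ht, hle⟩

/-- Best-iterate convergence rate of gradient descent on an L-smooth convex function. -/
theorem gd_best_iterate_rate
    {d : ℕ} (f : EuclideanSpace ℝ (Fin d) → ℝ)
    (f' : EuclideanSpace ℝ (Fin d) → EuclideanSpace ℝ (Fin d))
    (hdiff : ∀ x, HasGradientAt f (f' x) x)
    (hconv : ConvexOn ℝ Set.univ f)
    (L : ℝ) (hL : 0 < L)
    (hlip : ∀ x y, ‖f' x - f' y‖ ≤ L * ‖x - y‖)
    (xstar : EuclideanSpace ℝ (Fin d))
    (hmin : ∀ z, f xstar ≤ f z)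
    (γ : ℝ) (hγ : 0 < γ) (hγL : γ ≤ 1 / L)
    (x : ℕ → EuclideanSpace ℝ (Fin d))
    (hiter : ∀ t, x (t + 1) = x t - γ • f' (x t))
    (C : ℝ) (hC : 0 < C) (h0 : ‖x 0 - xstar‖ ^ 2 ≤ C) :
    ∀ T : ℕ, 1 ≤ T → ∃ t < T, f (x t) - f xstar ≤ C / (γ * T) :=
  gd_best_iterate_rate_general f f' hdiff hconv L hL hlip xstar hmin γ hγ hγL x hiter C h0
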